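/- Fix t > 0, ε > 0, β, ρ ∈ ℝ, let δ = -|β| - |ρ|/t + √((|β| + |ρ|/t)² + 2ε/t), let γ₀ ≥ 0, let ν be a Borel measure on ℝ concentrated on (0,∞) with ∫ min(x,1) ν(dx) < ∞ and ∫_{x>1} e^{rx} ν(dx) < ∞ for all r < ε, and let π be a Borel probability measure on ℝ concentrated on (-∞,0). Then for every u in the strip S = {u ∈ ℂ : |Re u| < δ}, the iterated integral ∫_{(-∞,0)} ∫₀ᵗ |θ_L(u·f_u(A,s))| ds π(dA) is finite, and the map u ↦ ∫_{(-∞,0)} |∫₀ᵗ θ_L(u·f_u(A,s)) ds| π(dA) is locally bounded on S (it is bounded on every compact subset of S). -/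

import Mathlib

open MeasureTheory

/-- `u·f_u(A,s) = ((e^{A(t-s)} - 1)/A)(uβ + u²/2) + ρu` for complex `u`. -/
noncomputable def ufc (t β ρ : ℝ) (u : ℂ) (A s : ℝ) : ℂ :=
  (((Real.exp (A * (t - s)) - 1) / A : ℝ) : ℂ) * (u * (β : ℂ) + u ^ 2 / 2) + (ρ : ℂ) * u

/-- `θ_L(z) = γ₀ z + ∫_{(0,∞)} (e^{zx} - 1) ν(dx)`. -/
noncomputable def thetaL (γ₀ : ℝ) (ν : Measure ℝ) (z : ℂ) : ℂ :=
  (γ₀ : ℂ) * z + ∫ x in Set.Ioi (0 : ℝ), (Complex.exp (z * (x : ℂ)) - 1) ∂ν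

open Set

/-!
For `A < 0` and `0 < s ≤ t` the coefficient `(e^{A(t-s)} - 1)/A` lies in `[0, t]`, so
`u·f_u(A,s)` has norm at most `g(‖u‖)` and real part at most `g(|Re u|)`, where
`g(a) = t (|β| a + a²/2) + |ρ| a` is `ufcBound t β ρ a`. The width `δ` of the strip is the
positive root of `g(a) = ε`, so on a compact part of the strip the real part of `u·f_u(A,s)`
stays below some `r < ε`. The integrand of the jump part of `θ_L` is then dominated by a multiple
of `min(x, 1)` on `(0, 1]` and by `e^{rx} + 1` on `(1, ∞)`, which bounds `θ_L(u·f_u(A,s))`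
uniformly in `u`, `A` and `s`; both claims follow because `π` and `ds` on `(0, t]` are finite
measures.
-/

noncomputable def ufcBound (t β ρ a : ℝ) : ℝ := t * (|β| * a + a ^ 2 / 2) + |ρ| * a

lemma exp_mul_sub_one_div_mem_Icc {A τ : ℝ} (hA : A < 0) (hτ : 0 ≤ τ) :
    (Real.exp (A * τ) - 1) / A ∈ Icc 0 τ := by
  refine ⟨div_nonneg_of_nonpos ?_ hA.le, ?_⟩
  · linarith [Real.exp_le_one_iff.2 (mul_nonpos_of_nonpos_of_nonneg hA.le hτ)]
  · rw [div_le_iff_of_neg hA]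
    linarith [Real.add_one_le_exp (A * τ)]

section ufc

variable {t β ρ A s : ℝ}

lemma ufc_coeff_mem_Icc (hA : A < 0) (hs : s ∈ Ioc 0 t) :
    (Real.exp (A * (t - s)) - 1) / A ∈ Icc 0 t := by
  obtain ⟨hc₀, hc⟩ := exp_mul_sub_one_div_mem_Icc hA (sub_nonneg.2 hs.2)
  exact ⟨hc₀, hc.trans (by linarith [hs.1])⟩

lemma norm_ufc_le (u : ℂ) (hA : A < 0) (hs : s ∈ Ioc 0 t) :
    ‖ufc t β ρ u A s‖ ≤ ufcBound t β ρ ‖u‖ := by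
  obtain ⟨hc₀, hct⟩ := ufc_coeff_mem_Icc hA hs
  set c := (Real.exp (A * (t - s)) - 1) / A
  have hw : ‖u * (β : ℂ) + u ^ 2 / 2‖ ≤ |β| * ‖u‖ + ‖u‖ ^ 2 / 2 := by
    refine (norm_add_le _ _).trans_eq ?_
    simp [norm_pow, mul_comm]
  calc ‖ufc t β ρ u A s‖ ≤ c * ‖u * (β : ℂ) + u ^ 2 / 2‖ + |ρ| * ‖u‖ := by
        refine (norm_add_le _ _).trans_eq ?_
        rw [norm_mul, norm_mul, Complex.norm_real, Complex.norm_real, Real.norm_of_nonneg hc₀,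
          Real.norm_eq_abs]
    _ ≤ ufcBound t β ρ ‖u‖ := by
        unfold ufcBound
        gcongr ?_ + _
        exact mul_le_mul hct hw (norm_nonneg _) (hc₀.trans hct)

lemma re_ufc_le (u : ℂ) (hA : A < 0) (hs : s ∈ Ioc 0 t) :
    (ufc t β ρ u A s).re ≤ ufcBound t β ρ |u.re| := by
  obtain ⟨hc₀, hct⟩ := ufc_coeff_mem_Icc hA hs
  set c := (Real.exp (A * (t - s)) - 1) / A
  have hre : (ufc t β ρ u A s).re
      = c * (β * u.re + (u.re ^ 2 - u.im ^ 2) / 2) + ρ * u.re := by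
    change ((c : ℂ) * (u * β + u ^ 2 / 2) + ρ * u).re = _
    simp only [Complex.add_re, Complex.mul_re, Complex.ofReal_re, Complex.ofReal_im,
      Complex.div_ofNat_re, pow_two]
    ring
  have hw : β * u.re + (u.re ^ 2 - u.im ^ 2) / 2 ≤ |β| * |u.re| + |u.re| ^ 2 / 2 := by
    nlinarith [le_abs_self (β * u.re), abs_mul β u.re, sq_abs u.re, sq_nonneg u.im]
  rw [hre, ufcBound]
  gcongr ?_ + ?_
  · exact (mul_le_mul_of_nonneg_left hw hc₀).trans (mul_le_mul_of_nonneg_right hct (by positivity))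
  · exact (le_abs_self _).trans (abs_mul ρ u.re).le

lemma ufcBound_lt {ε a : ℝ} (ht : 0 < t) (ha : 0 ≤ a)
    (haδ : a < -|β| - |ρ| / t + Real.sqrt ((|β| + |ρ| / t) ^ 2 + 2 * ε / t)) :
    ufcBound t β ρ a < ε := by
  set B := |β| + |ρ| / t
  have h := (Real.lt_sqrt (by positivity : 0 ≤ a + B)).1 (by linarith)
  calc ufcBound t β ρ a = t / 2 * ((a + B) ^ 2 - B ^ 2) := by
        unfold ufcBound B
        field_simp
        ring
    _ < t / 2 * (2 * ε / t) := by gcongr; linarith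
    _ = ε := by field_simp

lemma exists_lt_forall_ufcBound_abs_re_le {ε : ℝ} (ht : 0 < t) {K : Set ℂ} (hK : IsCompact K)
    (hKδ : K ⊆ {u : ℂ | |u.re| < -|β| - |ρ| / t + Real.sqrt ((|β| + |ρ| / t) ^ 2 + 2 * ε / t)}) :
    ∃ r < ε, ∀ u ∈ K, ufcBound t β ρ |u.re| ≤ r := by
  rcases K.eq_empty_or_nonempty with rfl | hne
  · exact ⟨ε - 1, by linarith, by simp⟩
  obtain ⟨u₀, hu₀, hmax⟩ := hK.exists_isMaxOn hne (f := fun u => ufcBound t β ρ |u.re|)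
    (by unfold ufcBound; fun_prop)
  exact ⟨_, ufcBound_lt ht (abs_nonneg _) (hKδ hu₀), fun u hu => hmax hu⟩

end ufc

noncomputable def levyMajorant (r M x : ℝ) : ℝ :=
  M * Real.exp M * min x 1 + (Ioi 1).indicator (fun x => Real.exp (r * x) + 1) x

lemma integrable_levyMajorant {ν : Measure ℝ} {r : ℝ} (hmin : Integrable (fun x => min x 1) ν)
    (hexp : IntegrableOn (fun x => Real.exp (r * x)) (Ioi 1) ν) (M : ℝ) :
    Integrable (levyMajorant r M) ν := by
  have hone : IntegrableOn (fun _ => (1 : ℝ)) (Ioi 1) ν :=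
    hmin.integrableOn.congr_fun (fun x hx => min_eq_right (le_of_lt hx)) measurableSet_Ioi
  exact (hmin.const_mul _).add ((hexp.add hone).integrable_indicator measurableSet_Ioi)

lemma norm_cexp_mul_sub_one_le_levyMajorant {z : ℂ} {r M x : ℝ} (hzM : ‖z‖ ≤ M)
    (hzr : z.re ≤ r) (hx : 0 < x) :
    ‖Complex.exp (z * x) - 1‖ ≤ levyMajorant r M x := by
  have hM : 0 ≤ M := (norm_nonneg z).trans hzM
  rcases le_or_gt x 1 with hx1 | hx1
  · have hzx : ‖z * x‖ ≤ M * x := by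
      rw [norm_mul, Complex.norm_real, Real.norm_of_nonneg hx.le]
      gcongr
    have hexp := Complex.norm_exp_sub_sum_le_norm_mul_exp (z * x) 1
    simp only [Finset.range_one, Finset.sum_singleton, pow_zero, pow_one, Nat.factorial_zero,
      Nat.cast_one, div_one] at hexp
    rw [levyMajorant, min_eq_left hx1, indicator_of_notMem (show x ∉ Ioi 1 from not_lt.2 hx1),
      add_zero]
    calc ‖Complex.exp (z * x) - 1‖ ≤ ‖z * x‖ * Real.exp ‖z * x‖ := hexp
      _ ≤ M * x * Real.exp M := by
          gcongr
          exact hzx.trans (mul_le_of_le_one_right hM hx1)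
      _ = M * Real.exp M * x := by ring
  · rw [levyMajorant, min_eq_right hx1.le, indicator_of_mem (show x ∈ Ioi 1 from hx1), mul_one]
    calc ‖Complex.exp (z * x) - 1‖ ≤ ‖Complex.exp (z * x)‖ + 1 := by
          simpa using norm_sub_le (Complex.exp (z * x)) 1
      _ ≤ Real.exp (r * x) + 1 := by
          rw [Complex.norm_exp, Complex.re_mul_ofReal]
          gcongr
      _ ≤ M * Real.exp M + (Real.exp (r * x) + 1) := le_add_of_nonneg_left (by positivity)

lemma norm_thetaL_le (γ₀ : ℝ) {ν : Measure ℝ} {z : ℂ} {r M : ℝ} (hzM : ‖z‖ ≤ M)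
    (hzr : z.re ≤ r) (hg : Integrable (levyMajorant r M) ν) :
    ‖thetaL γ₀ ν z‖ ≤ |γ₀| * M + ∫ x in Ioi 0, levyMajorant r M x ∂ν := by
  refine (norm_add_le _ _).trans (add_le_add ?_ ?_)
  · rw [norm_mul, Complex.norm_real, Real.norm_eq_abs]
    gcongr
  · exact norm_integral_le_of_norm_le hg.integrableOn <| (ae_restrict_iff' measurableSet_Ioi).2 <|
      .of_forall fun x hx => norm_cexp_mul_sub_one_le_levyMajorant hzM hzr hx

theorem exists_bound_norm_thetaL_ufc {t ε β ρ γ₀ : ℝ} (ht : 0 < t) {ν : Measure ℝ}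
    (hmin : Integrable (fun x => min x 1) ν)
    (hexp : ∀ r < ε, IntegrableOn (fun x => Real.exp (r * x)) (Ioi 1) ν) {K : Set ℂ}
    (hK : IsCompact K)
    (hKδ : K ⊆ {u : ℂ | |u.re| < -|β| - |ρ| / t + Real.sqrt ((|β| + |ρ| / t) ^ 2 + 2 * ε / t)}) :
    ∃ C, ∀ u ∈ K, ∀ A < 0, ∀ s ∈ Ioc 0 t, ‖thetaL γ₀ ν (ufc t β ρ u A s)‖ ≤ C := by
  obtain ⟨r, hrε, hr⟩ := exists_lt_forall_ufcBound_abs_re_le ht hK hKδ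
  obtain ⟨M, hM⟩ := hK.bddAbove_image (f := fun u => ufcBound t β ρ ‖u‖)
    (by unfold ufcBound; fun_prop)
  refine ⟨|γ₀| * M + ∫ x in Ioi 0, levyMajorant r M x ∂ν, fun u hu A hA s hs => ?_⟩
  exact norm_thetaL_le γ₀ ((norm_ufc_le u hA hs).trans (hM (mem_image_of_mem _ hu)))
    ((re_ufc_le u hA hs).trans (hr u hu)) (integrable_levyMajorant hmin (hexp r hrε) M)

lemma setLIntegral_setLIntegral_nnnorm_lt_top {α β E : Type*} [MeasurableSpace α]
    [MeasurableSpace β] [NormedAddCommGroup E] {μ : Measure α} {ν : Measure β} {S : Set α}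
    {T : Set β} (hS : μ S ≠ ⊤) (hT : ν T ≠ ⊤) {f : α → β → E} {C : ℝ}
    (hf : ∀ a ∈ S, ∀ b ∈ T, ‖f a b‖ ≤ C) :
    ∫⁻ a in S, ∫⁻ b in T, ‖f a b‖₊ ∂ν ∂μ < ⊤ := by
  calc ∫⁻ a in S, ∫⁻ b in T, ‖f a b‖₊ ∂ν ∂μ ≤ ∫⁻ _ in S, ∫⁻ _ in T, ENNReal.ofReal C ∂ν ∂μ :=
        setLIntegral_mono measurable_const fun a ha => setLIntegral_mono measurable_const
          fun b hb => by
            rw [← enorm_eq_nnnorm, ← ofReal_norm]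
            exact ENNReal.ofReal_le_ofReal (hf a ha b hb)
    _ = ENNReal.ofReal C * ν T * μ S := by simp only [setLIntegral_const]
    _ < ⊤ := by finiteness

theorem stmt_8_general (t ε β ρ γ₀ : ℝ) (ht : 0 < t)
    (ν : Measure ℝ)
    (hmin : Integrable (fun x : ℝ => min x 1) ν)
    (hexp : ∀ r : ℝ, r < ε → IntegrableOn (fun x : ℝ => Real.exp (r * x)) {x | 1 < x} ν)
    (π : Measure ℝ) [IsProbabilityMeasure π] :
    (∀ u : ℂ, |u.re| < -|β| - |ρ| / t + Real.sqrt ((|β| + |ρ| / t) ^ 2 + 2 * ε / t) →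
      (∫⁻ A in Set.Iio (0 : ℝ),
          ∫⁻ s in Set.Ioc (0 : ℝ) t, ‖thetaL γ₀ ν (ufc t β ρ u A s)‖₊ ∂volume ∂π) < ⊤) ∧
    ∀ K : Set ℂ,
      K ⊆ {u : ℂ | |u.re| < -|β| - |ρ| / t + Real.sqrt ((|β| + |ρ| / t) ^ 2 + 2 * ε / t)} →
      IsCompact K → ∃ C : ℝ, ∀ u ∈ K,
        (∫ A in Set.Iio (0 : ℝ),
            ‖∫ s in (0 : ℝ)..t, thetaL γ₀ ν (ufc t β ρ u A s)‖ ∂π) ≤ C := by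
  refine ⟨fun u hu => ?_, fun K hKδ hK => ?_⟩
  · obtain ⟨C, hC⟩ := exists_bound_norm_thetaL_ufc (γ₀ := γ₀) ht hmin hexp isCompact_singleton
      (singleton_subset_iff.2 hu)
    exact setLIntegral_setLIntegral_nnnorm_lt_top (measure_ne_top _ _) measure_Ioc_lt_top.ne
      (hC u rfl)
  · obtain ⟨C, hC⟩ := exists_bound_norm_thetaL_ufc (γ₀ := γ₀) ht hmin hexp hK hKδ
    refine ⟨C * |t - 0| * π.real (Iio 0), fun u hu => ?_⟩
    have hinner : ∀ A ∈ Iio (0 : ℝ),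
        ‖‖∫ s in (0 : ℝ)..t, thetaL γ₀ ν (ufc t β ρ u A s)‖‖ ≤ C * |t - 0| :=
      fun A hA => (norm_norm _).trans_le <| intervalIntegral.norm_integral_le_of_norm_le_const
        fun s hs => hC u hu A hA s (by rwa [uIoc_of_le ht.le] at hs)
    exact (le_abs_self _).trans (norm_setIntegral_le_of_norm_le_const (measure_lt_top _ _) hinner)

theorem stmt_8 (t ε β ρ γ₀ : ℝ) (ht : 0 < t) (hε : 0 < ε) (hγ₀ : 0 ≤ γ₀)
    (ν : Measure ℝ) (hν : ν (Set.Ioi (0 : ℝ))ᶜ = 0)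
    (hmin : Integrable (fun x : ℝ => min x 1) ν)
    (hexp : ∀ r : ℝ, r < ε → IntegrableOn (fun x : ℝ => Real.exp (r * x)) {x | 1 < x} ν)
    (π : Measure ℝ) [IsProbabilityMeasure π] (hπ : π (Set.Iio (0 : ℝ))ᶜ = 0) :
    (∀ u : ℂ, |u.re| < -|β| - |ρ| / t + Real.sqrt ((|β| + |ρ| / t) ^ 2 + 2 * ε / t) →
      (∫⁻ A in Set.Iio (0 : ℝ),
          ∫⁻ s in Set.Ioc (0 : ℝ) t, ‖thetaL γ₀ ν (ufc t β ρ u A s)‖₊ ∂volume ∂π) < ⊤) ∧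
    ∀ K : Set ℂ,
      K ⊆ {u : ℂ | |u.re| < -|β| - |ρ| / t + Real.sqrt ((|β| + |ρ| / t) ^ 2 + 2 * ε / t)} →
      IsCompact K → ∃ C : ℝ, ∀ u ∈ K,
        (∫ A in Set.Iio (0 : ℝ),
            ‖∫ s in (0 : ℝ)..t, thetaL γ₀ ν (ufc t β ρ u A s)‖ ∂π) ≤ C :=
  stmt_8_general t ε β ρ γ₀ ht ν hmin hexp π
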